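/- Let D ≥ 1 and let γ : [0, ∞) → ℝ^d be a unit-Euclidean-speed curve from 0 such that for some L ≥ 0 and all l ≥ L, |γ(l)| ≤ l ≤ D|γ(l)|. Fix ρ̃ > 0 and define times l_0 = 0 and l_j = inf{l ∈ F : l > l_{j-1} and |γ(l) − γ(l_{j'})| ≥ 2ρ̃ for all j' < j}, where F is the frontier-time set for β = 1/(2D) as above, and δ = 1/(2D−1). Then with A = 8ρ̃/(βδ): for every j with l_j ≥ L (and l_j finite), l_j ≤ A·j. -/

import Mathlib

/-!
Let `R` be the running supremum of `r = ‖γ‖`. Since `r` is 1-Lipschitz on `[0, ∞)`, `R` and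
`t ↦ t - R t` are monotone, so the Stieltjes measure `μ` of `R` is absolutely continuous with
density `R'`, and `μ` vanishes on the open set where `r < R`, on which `R` is locally constant.
Where `r = R` and both are differentiable, `r - R` has a local maximum, so `R' = r'`: thus
`R' > β` a.e. on the frontier set `F` and `R' ≤ β` a.e. where `r = R` off `F`. Comparing
`l / D ≤ r l ≤ R l = μ (0, l]` with these density bounds gives `Leb (F ∩ (0, l]) ≥ δ l`.
By the greedy choice of the `l_j`, every point of `F ∩ (0, l_j]` lies within `2ρ̃` of some
`γ (l_k)`, `k ≤ j`; on such a piece of `F` the values of `R = r` vary by at most `4ρ̃`, so its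
measure is at most `4ρ̃ / β`.
-/

open Set MeasureTheory Filter Topology ENNReal

namespace StieltjesFunction

variable (f : StieltjesFunction ℝ)

theorem measure_le_volume (hf : Monotone fun x => x - f x) : f.measure ≤ volume := by
  let g : StieltjesFunction ℝ :=
    ⟨fun x => x - f x, hf, fun x => continuousWithinAt_id.sub (f.right_continuous x)⟩
  have hfg : f + g = StieltjesFunction.id := by
    ext x
    exact add_sub_cancel (f x) x
  intro s
  rw [Real.volume_eq_stieltjes_id, ← hfg, measure_add]
  exact le_self_add

theorem measure_eq_zero_of_eventuallyEq {s : Set ℝ} (h : ∀ x ∈ s, ∀ᶠ y in 𝓝 x, f y = f x) :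
    f.measure s = 0 := by
  refine measure_null_of_locally_null s fun x hx => ?_
  obtain ⟨ε, hε, hball⟩ := Metric.eventually_nhds_iff.1 (h x hx)
  have hconst : ∀ y ∈ Icc (x - ε / 2) (x + ε / 2), f y = f x := fun y hy =>
    hball (by rw [Real.dist_eq, abs_lt]; constructor <;> linarith [hy.1, hy.2])
  refine ⟨Ioc (x - ε / 2) (x + ε / 2),
    mem_nhdsWithin_of_mem_nhds (Ioc_mem_nhds (by linarith) (by linarith)), ?_⟩
  rw [measure_Ioc, hconst _ (right_mem_Icc.2 (by linarith)),
    hconst _ (left_mem_Icc.2 (by linarith)), sub_self, ofReal_zero]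

theorem ofReal_mul_volume_le_measure {s : Set ℝ} {β : ℝ} (hs : MeasurableSet s)
    (h : ∀ᵐ x, x ∈ s → β ≤ deriv f x) : ENNReal.ofReal β * volume s ≤ f.measure s :=
  calc ENNReal.ofReal β * volume s = ∫⁻ _ in s, ENNReal.ofReal β := (setLIntegral_const _ _).symm
    _ ≤ ∫⁻ x in s, f.measure.rnDeriv volume x := by
      refine setLIntegral_mono_ae' hs ?_
      filter_upwards [f.ae_hasDerivAt, h] with x hderiv hx hxs
      exact ofReal_le_of_le_toReal (hderiv.deriv ▸ hx hxs)
    _ = volume.withDensity (f.measure.rnDeriv volume) s := (withDensity_apply _ hs).symm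
    _ ≤ f.measure s := Measure.withDensity_rnDeriv_le _ _ s

theorem measure_le_ofReal_mul_volume (hf : f.measure ≪ volume) {s : Set ℝ} {β : ℝ}
    (hs : MeasurableSet s) (h : ∀ᵐ x, x ∈ s → deriv f x ≤ β) :
    f.measure s ≤ ENNReal.ofReal β * volume s :=
  calc f.measure s = volume.withDensity (f.measure.rnDeriv volume) s := by
        rw [Measure.withDensity_rnDeriv_eq _ _ hf]
    _ = ∫⁻ x in s, f.measure.rnDeriv volume x := withDensity_apply _ hs
    _ ≤ ∫⁻ _ in s, ENNReal.ofReal β := by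
      refine setLIntegral_mono_ae' hs ?_
      filter_upwards [f.ae_hasDerivAt, h, Measure.rnDeriv_lt_top f.measure volume]
        with x hderiv hx hfin hxs
      rw [← ofReal_toReal hfin.ne]
      exact ofReal_le_ofReal (hderiv.deriv ▸ hx hxs)
    _ = ENNReal.ofReal β * volume s := setLIntegral_const _ _

end StieltjesFunction

noncomputable def runningSup (r : ℝ → ℝ) (t : ℝ) : ℝ := sSup (r '' Icc 0 t)

section runningSup

variable {r : ℝ → ℝ} {s t : ℝ}

theorem runningSup_of_neg (ht : t < 0) : runningSup r t = 0 := by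
  simp [runningSup, Icc_eq_empty_of_lt ht]

theorem runningSup_zero : runningSup r 0 = r 0 := by
  simp [runningSup]

theorem bddAbove_image_Icc (hr : ContinuousOn r (Ici 0)) : BddAbove (r '' Icc 0 t) :=
  (isCompact_Icc.image_of_continuousOn (hr.mono Icc_subset_Ici_self)).bddAbove

theorem le_runningSup (hr : ContinuousOn r (Ici 0)) (hs : 0 ≤ s) (hst : s ≤ t) :
    r s ≤ runningSup r t :=
  le_csSup (bddAbove_image_Icc hr) (mem_image_of_mem r ⟨hs, hst⟩)

theorem runningSup_le_iff (hr : ContinuousOn r (Ici 0)) (ht : 0 ≤ t) {c : ℝ} :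
    runningSup r t ≤ c ↔ ∀ s ∈ Icc 0 t, r s ≤ c := by
  rw [runningSup, csSup_le_iff (bddAbove_image_Icc hr) ((nonempty_Icc.2 ht).image r),
    forall_mem_image]

theorem exists_eq_runningSup (hr : ContinuousOn r (Ici 0)) (ht : 0 ≤ t) :
    ∃ s ∈ Icc 0 t, r s = runningSup r t :=
  (isCompact_Icc.image_of_continuousOn (hr.mono Icc_subset_Ici_self)).sSup_mem
    ((nonempty_Icc.2 ht).image r)

theorem monotone_runningSup (h0 : r 0 = 0) (hr : ContinuousOn r (Ici 0)) :
    Monotone (runningSup r) := by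
  intro s t hst
  rcases lt_or_ge s 0 with hs | hs
  · rcases lt_or_ge t 0 with ht | ht
    · rw [runningSup_of_neg hs, runningSup_of_neg ht]
    · rw [runningSup_of_neg hs, ← h0]
      exact le_runningSup hr le_rfl ht
  · exact (runningSup_le_iff hr hs).2 fun u hu => le_runningSup hr hu.1 (hu.2.trans hst)

theorem runningSup_le_add (hr : LipschitzOnWith 1 r (Ici 0)) (hs : 0 ≤ s) (hst : s ≤ t) :
    runningSup r t ≤ runningSup r s + (t - s) := by
  refine (runningSup_le_iff hr.continuousOn (hs.trans hst)).2 fun u hu => ?_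
  rcases le_total u s with hus | hsu
  · linarith [le_runningSup hr.continuousOn hu.1 hus]
  · have hlip := hr.le_add_mul hu.1 hs
    rw [NNReal.coe_one, one_mul, Real.dist_eq, abs_of_nonneg (sub_nonneg.2 hsu)] at hlip
    linarith [le_runningSup hr.continuousOn hs le_rfl, hu.2]

theorem monotone_sub_runningSup (h0 : r 0 = 0) (hr : LipschitzOnWith 1 r (Ici 0)) :
    Monotone fun t => t - runningSup r t := by
  intro s t hst
  rcases lt_or_ge t 0 with ht | ht
  · simp only [runningSup_of_neg ht, runningSup_of_neg (hst.trans_lt ht)]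
    linarith
  rcases lt_or_ge s 0 with hs | hs
  · have := runningSup_le_add hr le_rfl ht
    rw [runningSup_zero, h0] at this
    dsimp only
    linarith [runningSup_of_neg (r := r) hs]
  · have := runningSup_le_add hr hs hst
    dsimp only
    linarith

theorem continuous_runningSup (h0 : r 0 = 0) (hr : LipschitzOnWith 1 r (Ici 0)) :
    Continuous (runningSup r) := by
  refine (LipschitzWith.of_le_add fun s t => ?_).continuous
  rcases le_total s t with hst | hts
  · exact le_add_of_le_of_nonneg (monotone_runningSup h0 hr.continuousOn hst) dist_nonneg
  · have := monotone_sub_runningSup h0 hr hts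
    rw [Real.dist_eq, abs_of_nonneg (sub_nonneg.2 hts)]
    dsimp only at this
    linarith

theorem runningSup_eventuallyEq (hr : ContinuousOn r (Ici 0)) (ht : 0 < t)
    (hlt : r t < runningSup r t) : ∀ᶠ u in 𝓝 t, runningSup r u = runningSup r t := by
  obtain ⟨t₀, ht₀, heq⟩ := exists_eq_runningSup hr ht.le
  have ht₀t : t₀ < t := ht₀.2.lt_of_ne (by rintro rfl; exact hlt.ne heq)
  have hnear : ∀ᶠ v in 𝓝[>] t, r v < runningSup r t :=
    ((hr.continuousAt (Ici_mem_nhds ht)).eventually (gt_mem_nhds hlt)).filter_mono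
      nhdsWithin_le_nhds
  obtain ⟨b, hb, hbsub⟩ := mem_nhdsGT_iff_exists_Ioo_subset.1 hnear
  refine mem_of_superset (Ioo_mem_nhds ht₀t hb) fun u hu => le_antisymm ?_ ?_
  · refine (runningSup_le_iff hr (ht₀.1.trans hu.1.le)).2 fun v hv => ?_
    rcases le_or_gt v t with hvt | htv
    · exact le_runningSup hr hv.1 hvt
    · exact (hbsub ⟨htv, hv.2.trans_lt hu.2⟩).le
  · exact heq ▸ le_runningSup hr ht₀.1 hu.1.le

theorem deriv_runningSup_eq (hr : ContinuousOn r (Ici 0)) (ht : 0 < t)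
    (heq : r t = runningSup r t) (hr' : DifferentiableAt ℝ r t)
    (hR : DifferentiableAt ℝ (runningSup r) t) : deriv (runningSup r) t = deriv r t := by
  have hmax : IsLocalMax (r - runningSup r) t :=
    mem_of_superset (Ioi_mem_nhds ht) fun u hu => by
      simpa [heq] using le_runningSup hr (le_of_lt hu) le_rfl
  have := hmax.deriv_eq_zero
  rw [deriv_sub hr' hR, sub_eq_zero] at this
  exact this.symm

theorem isClosed_setOf_eq_runningSup (h0 : r 0 = 0) (hr : LipschitzOnWith 1 r (Ici 0)) :
    IsClosed {t | 0 ≤ t ∧ r t = runningSup r t} := by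
  have := (hr.continuousOn.sub (continuous_runningSup h0 hr).continuousOn
    ).preimage_isClosed_of_isClosed isClosed_Ici (isClosed_singleton (x := (0 : ℝ)))
  convert this using 1
  ext u
  simp [sub_eq_zero]

noncomputable def runningSupStieltjes (h0 : r 0 = 0) (hr : LipschitzOnWith 1 r (Ici 0)) :
    StieltjesFunction ℝ where
  toFun := runningSup r
  mono' := monotone_runningSup h0 hr.continuousOn
  right_continuous' _ := (continuous_runningSup h0 hr).continuousWithinAt

end runningSup

def frontierTimes (r : ℝ → ℝ) (β : ℝ) : Set ℝ :=
  {s | 0 ≤ s ∧ β < deriv r s ∧ r s = runningSup r s}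

section frontierTimes

variable {r : ℝ → ℝ} {β : ℝ} (h0 : r 0 = 0) (hr : LipschitzOnWith 1 r (Ici 0))
include h0 hr

theorem measurableSet_frontierTimes : MeasurableSet (frontierTimes r β) := by
  have hmeas := (isClosed_setOf_eq_runningSup h0 hr).measurableSet.inter
    (measurableSet_lt measurable_const (measurable_deriv r) : MeasurableSet {s | β < deriv r s})
  convert hmeas using 1
  ext s
  simp only [frontierTimes, mem_ofPred_eq, mem_inter_iff]
  tauto

theorem runningSupStieltjes_measure_le : (runningSupStieltjes h0 hr).measure ≤ volume :=
  StieltjesFunction.measure_le_volume _ (monotone_sub_runningSup h0 hr)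

theorem ae_le_deriv_runningSup (hβ : 0 ≤ β) :
    ∀ᵐ t, t ∈ frontierTimes r β → β ≤ deriv (runningSup r) t := by
  filter_upwards [(monotone_runningSup h0 hr.continuousOn).ae_differentiableAt,
    compl_mem_ae_iff.2 (measure_singleton (0 : ℝ))] with t hR ht0 ⟨ht, hβt, heq⟩
  have hr' : DifferentiableAt ℝ r t := differentiableAt_of_deriv_ne_zero (hβ.trans_lt hβt).ne'
  rw [deriv_runningSup_eq hr.continuousOn (ht.lt_of_ne (Ne.symm ht0)) heq hr' hR]
  exact hβt.le

theorem ae_deriv_runningSup_le :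
    ∀ᵐ t, 0 < t → t ∉ frontierTimes r β → r t = runningSup r t →
      deriv (runningSup r) t ≤ β := by
  filter_upwards [(monotone_runningSup h0 hr.continuousOn).ae_differentiableAt,
    (hr.mono Ioi_subset_Ici_self).ae_differentiableWithinAt_of_mem] with t hR hr' ht htF heq
  rw [deriv_runningSup_eq hr.continuousOn ht heq
    ((hr' ht).differentiableAt (Ioi_mem_nhds ht)) hR]
  exact not_lt.1 fun hβt => htF ⟨ht.le, hβt, heq⟩

theorem runningSupStieltjes_measure_le_ofReal_mul_volume {E : Set ℝ} (hE : MeasurableSet E)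
    (hEF : E ⊆ Ioi 0 \ frontierTimes r β) :
    (runningSupStieltjes h0 hr).measure E ≤ ENNReal.ofReal β * volume E := by
  set f := runningSupStieltjes h0 hr
  set U := {t | 0 < t ∧ r t < runningSup r t}
  set G := E ∩ {t | 0 ≤ t ∧ r t = runningSup r t}
  have hU : f.measure U = 0 := f.measure_eq_zero_of_eventuallyEq fun t ht =>
    runningSup_eventuallyEq hr.continuousOn ht.1 ht.2
  have hG : f.measure G ≤ ENNReal.ofReal β * volume E := by
    refine (f.measure_le_ofReal_mul_volume
      (Measure.absolutelyContinuous_of_le (runningSupStieltjes_measure_le h0 hr))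
      (hE.inter (isClosed_setOf_eq_runningSup h0 hr).measurableSet) ?_).trans
      (by gcongr; exact inter_subset_left)
    filter_upwards [ae_deriv_runningSup_le h0 hr] with t ht htG
    exact ht (hEF htG.1).1 (hEF htG.1).2 htG.2.2
  have hcover : E ⊆ U ∪ G := fun t ht => by
    rcases (le_runningSup hr.continuousOn (hEF ht).1.le le_rfl).lt_or_eq with hlt | heq
    · exact Or.inl ⟨(hEF ht).1, hlt⟩
    · exact Or.inr ⟨ht, (hEF ht).1.le, heq⟩
  calc f.measure E ≤ f.measure U + f.measure G :=
        (measure_mono hcover).trans (measure_union_le _ _)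
    _ ≤ ENNReal.ofReal β * volume E := by rw [hU, zero_add]; exact hG

theorem runningSup_le_volume_frontierTimes (hβ : 0 ≤ β) (s : ℝ) :
    runningSup r s ≤ volume.real (Ioc 0 s ∩ frontierTimes r β) +
      β * volume.real (Ioc 0 s \ frontierTimes r β) := by
  set f := runningSupStieltjes h0 hr
  set F := frontierTimes r β
  have hF : MeasurableSet F := measurableSet_frontierTimes h0 hr
  have key : ENNReal.ofReal (runningSup r s) ≤
      volume (Ioc 0 s ∩ F) + ENNReal.ofReal β * volume (Ioc 0 s \ F) :=
    calc ENNReal.ofReal (runningSup r s) = f.measure (Ioc 0 s) := by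
          rw [f.measure_Ioc]
          simp [f, runningSupStieltjes, runningSup_zero, h0]
      _ = f.measure (Ioc 0 s ∩ F) + f.measure (Ioc 0 s \ F) := (measure_inter_add_sdiff _ hF).symm
      _ ≤ volume (Ioc 0 s ∩ F) + ENNReal.ofReal β * volume (Ioc 0 s \ F) :=
          add_le_add (runningSupStieltjes_measure_le h0 hr _)
            (runningSupStieltjes_measure_le_ofReal_mul_volume h0 hr (measurableSet_Ioc.diff hF)
              fun t ht => ⟨ht.1.1, ht.2⟩)
  rw [← ofReal_measureReal (measure_ne_top_of_subset inter_subset_left measure_Ioc_lt_top.ne),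
    ← ofReal_measureReal (measure_ne_top_of_subset sdiff_subset measure_Ioc_lt_top.ne),
    ← ENNReal.ofReal_mul hβ, ← ENNReal.ofReal_add measureReal_nonneg (by positivity)] at key
  exact (ENNReal.ofReal_le_ofReal_iff (by positivity)).1 key

theorem div_le_volume_frontierTimes {D s : ℝ} (hD : 1 / 2 < D) (hs : 0 ≤ s)
    (hsr : s ≤ D * r s) :
    s / (2 * D - 1) ≤ volume.real (Ioc 0 s ∩ frontierTimes r (1 / (2 * D))) := by
  have hbound := runningSup_le_volume_frontierTimes h0 hr (β := 1 / (2 * D)) (by positivity) s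
  have hsplit := measureReal_inter_add_sdiff (μ := volume) (s := Ioc 0 s)
    (measurableSet_frontierTimes h0 hr (β := 1 / (2 * D))) measure_Ioc_lt_top.ne
  rw [Real.volume_real_Ioc_of_le hs, sub_zero] at hsplit
  have hrs := le_runningSup hr.continuousOn hs le_rfl
  rw [div_le_iff₀ (by linarith)]
  field_simp at hbound
  nlinarith

theorem mul_volume_le_of_forall_sub_le (hβ : 0 ≤ β) {I : Set ℝ} {c : ℝ}
    (hIF : I ⊆ frontierTimes r β) (hIm : MeasurableSet I) (hIb : BddAbove I)
    (hc : ∀ p ∈ I, ∀ q ∈ I, r q - r p ≤ c) (hc₀ : 0 ≤ c) : β * volume.real I ≤ c := by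
  rcases I.eq_empty_or_nonempty with rfl | hI
  · simpa using hc₀
  set f := runningSupStieltjes h0 hr
  have hRS : Continuous (runningSup r) := continuous_runningSup h0 hr
  have hmono : Monotone (runningSup r) := monotone_runningSup h0 hr.continuousOn
  have hIb' : BddBelow I := ⟨0, fun t ht => (hIF ht).1⟩
  have hIcc : I ⊆ Icc (sInf I) (sSup I) := fun t ht => ⟨csInf_le hIb' ht, le_csSup hIb ht⟩
  have hRS_sub : ∀ p ∈ I, ∀ q ∈ I, runningSup r q ≤ runningSup r p + c := fun p hp q hq => by
    rw [← (hIF hp).2.2, ← (hIF hq).2.2]; linarith [hc p hp q hq]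
  have hosc : runningSup r (sSup I) ≤ runningSup r (sInf I) + c := by
    rw [hmono.map_csSup_of_continuousAt hRS.continuousAt hI hIb,
      hmono.map_csInf_of_continuousAt hRS.continuousAt hI hIb']
    refine csSup_le (hI.image _) (forall_mem_image.2 fun q hq => ?_)
    rw [← sub_le_iff_le_add]
    exact le_csInf (hI.image _) (forall_mem_image.2 fun p hp => by linarith [hRS_sub p hp q hq])
  have key : ENNReal.ofReal β * volume I ≤ ENNReal.ofReal c :=
    calc ENNReal.ofReal β * volume I ≤ f.measure I := by
          refine f.ofReal_mul_volume_le_measure hIm ?_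
          filter_upwards [ae_le_deriv_runningSup h0 hr hβ] with t ht htI using ht (hIF htI)
      _ ≤ f.measure (Icc (sInf I) (sSup I)) := measure_mono hIcc
      _ = ENNReal.ofReal (runningSup r (sSup I) - runningSup r (sInf I)) := by
          rw [f.measure_Icc]
          show ENNReal.ofReal (runningSup r _ - Function.leftLim (runningSup r) _) = _
          rw [hRS.continuousWithinAt.leftLim_eq]
      _ ≤ ENNReal.ofReal c := ENNReal.ofReal_le_ofReal (by linarith)
  rw [← ofReal_measureReal (measure_ne_top_of_subset hIcc measure_Icc_lt_top.ne),
    ← ENNReal.ofReal_mul hβ] at key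
  exact (ENNReal.ofReal_le_ofReal_iff hc₀).1 key

end frontierTimes

theorem exists_norm_sub_lt_of_greedy {E : Type*} [SeminormedAddCommGroup E] {γ : ℝ → E}
    {F : Set ℝ} (hF : F ⊆ Ici 0) {l : ℕ → ℝ} {ρ : ℝ} (hρ : 0 < ρ) (hl0 : l 0 = 0)
    (hl : ∀ j : ℕ, 1 ≤ j →
      l j = sInf { s | s ∈ F ∧ l (j - 1) < s ∧ ∀ j' < j, ρ ≤ ‖γ s - γ (l j')‖ })
    {s : ℝ} (hs : s ∈ F) : ∀ j, s ≤ l j → ∃ k ≤ j, ‖γ s - γ (l k)‖ < ρ := by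
  intro j
  induction j with
  | zero =>
    intro hsj
    have : s = l 0 := le_antisymm (hl0 ▸ hsj) (hl0 ▸ hF hs)
    exact ⟨0, le_rfl, by simpa [this] using hρ⟩
  | succ j ih =>
    intro hsj
    rcases le_or_gt s (l j) with hle | hlt
    · obtain ⟨k, hk, hclose⟩ := ih hle
      exact ⟨k, hk.trans j.le_succ, hclose⟩
    by_contra! hfar
    have hinf : l (j + 1) ≤ s := by
      rw [hl (j + 1) j.succ_pos]
      exact csInf_le ⟨0, fun t ht => hF ht.1⟩ ⟨hs, hlt, fun k hk => hfar k hk.le⟩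
    have := hfar (j + 1) le_rfl
    rw [le_antisymm hsj hinf, sub_self, norm_zero] at this
    linarith

theorem LipschitzOnWith.norm {α E : Type*} [PseudoEMetricSpace α] [SeminormedAddCommGroup E]
    {f : α → E} {K : NNReal} {s : Set α} (hf : LipschitzOnWith K f s) :
    LipschitzOnWith K (fun x => ‖f x‖) s := by
  simpa only [one_mul, Function.comp_def] using lipschitzWith_one_norm.comp_lipschitzOnWith hf

section curve

variable {E : Type*} [NormedAddCommGroup E] {γ : ℝ → E} {β : ℝ}

theorem mul_volume_frontierTimes_inter_preimage_closedBall_le (hγ0 : γ 0 = 0)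
    (hγ : LipschitzOnWith 1 γ (Ici 0)) (hβ : 0 ≤ β) (b : ℝ) (x : E) {ρ : ℝ} (hρ : 0 ≤ ρ) :
    β * volume.real (frontierTimes (fun t => ‖γ t‖) β ∩
      (Icc 0 b ∩ γ ⁻¹' Metric.closedBall x ρ)) ≤ 2 * ρ := by
  refine mul_volume_le_of_forall_sub_le (by simp [hγ0]) hγ.norm hβ inter_subset_left
    ((measurableSet_frontierTimes (by simp [hγ0]) hγ.norm).inter
      ((hγ.continuousOn.mono Icc_subset_Ici_self).preimage_isClosed_of_isClosed
        isClosed_Icc Metric.isClosed_closedBall).measurableSet)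
    ⟨b, fun t ht => ht.2.1.2⟩ (fun p hp q hq => ?_) (by linarith)
  have hp := mem_closedBall_iff_norm.1 hp.2.2
  have hq := mem_closedBall_iff_norm.1 hq.2.2
  have htri := norm_sub_le_norm_sub_add_norm_sub (γ q) x (γ p)
  rw [norm_sub_rev x] at htri
  linarith [norm_sub_norm_le (γ q) (γ p)]

theorem mul_volume_frontierTimes_inter_Ioc_le_of_greedy (hγ0 : γ 0 = 0)
    (hγ : LipschitzOnWith 1 γ (Ici 0)) (hβ : 0 ≤ β) {l : ℕ → ℝ} {ρ : ℝ} (hρ : 0 < ρ)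
    (hl0 : l 0 = 0)
    (hl : ∀ j : ℕ, 1 ≤ j → l j = sInf { s | s ∈ frontierTimes (fun t => ‖γ t‖) β ∧
      l (j - 1) < s ∧ ∀ j' < j, ρ ≤ ‖γ s - γ (l j')‖ }) (j : ℕ) :
    β * volume.real (Ioc 0 (l j) ∩ frontierTimes (fun t => ‖γ t‖) β) ≤ (j + 1) * (2 * ρ) := by
  set I : ℕ → Set ℝ := fun k => frontierTimes (fun t => ‖γ t‖) β ∩
    (Icc 0 (l j) ∩ γ ⁻¹' Metric.closedBall (γ (l k)) ρ)
  have hcover : Ioc 0 (l j) ∩ frontierTimes (fun t => ‖γ t‖) β ⊆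
      ⋃ k ∈ Finset.range (j + 1), I k := by
    rintro s ⟨hs, hsF⟩
    obtain ⟨k, hk, hclose⟩ :=
      exists_norm_sub_lt_of_greedy (fun t ht => ht.1) hρ hl0 hl hsF j hs.2
    exact mem_biUnion (Finset.mem_range_succ_iff.2 hk)
      ⟨hsF, ⟨hs.1.le, hs.2⟩, mem_closedBall_iff_norm.2 hclose.le⟩
  have hfin : volume (⋃ k ∈ Finset.range (j + 1), I k) ≠ ⊤ :=
    measure_ne_top_of_subset (iUnion₂_subset fun k _ t ht => ht.2.1) measure_Icc_lt_top.ne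
  calc β * volume.real (Ioc 0 (l j) ∩ frontierTimes (fun t => ‖γ t‖) β)
      ≤ β * ∑ k ∈ Finset.range (j + 1), volume.real (I k) := by
        gcongr
        exact (measureReal_mono hcover hfin).trans (measureReal_biUnion_finset_le _ _)
    _ ≤ ∑ _k ∈ Finset.range (j + 1), 2 * ρ := by
        rw [Finset.mul_sum]
        exact Finset.sum_le_sum fun k _ =>
          mul_volume_frontierTimes_inter_preimage_closedBall_le hγ0 hγ hβ _ _ hρ.le
    _ = (j + 1) * (2 * ρ) := by simp

end curve

/-- Linear growth of the frontier-time sequence: under the length comparison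
`|γ(l)| ≤ l ≤ D|γ(l)|` (for `l ≥ L`), the successive `2ρ̃`-separated frontier
times `l_j` satisfy `l_j ≤ A·j` with `A = 8ρ̃/(βδ)`. -/
theorem stmt_18 (d : ℕ) (γ : ℝ → EuclideanSpace ℝ (Fin d))
    (hγC1 : ContDiff ℝ 1 γ) (hγ0 : γ 0 = 0)
    (hunit : ∀ s : ℝ, 0 ≤ s → ‖deriv γ s‖ = 1)
    (r : ℝ → ℝ) (hr : r = fun s => ‖γ s‖)
    (D L : ℝ) (hD : 1 ≤ D) (hL : 0 ≤ L)
    (hcomp : ∀ s : ℝ, L ≤ s → r s ≤ s ∧ s ≤ D * r s)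
    (β δ A ρ' : ℝ) (hβ : β = 1 / (2 * D)) (hδ : δ = 1 / (2 * D - 1))
    (hρ' : 0 < ρ') (hA : A = 8 * ρ' / (β * δ))
    (F : Set ℝ)
    (hF : F = { s : ℝ | 0 ≤ s ∧ deriv r s > β ∧ r s = sSup (r '' Icc 0 s) })
    (l : ℕ → ℝ) (hl0 : l 0 = 0)
    (hlrec : ∀ j : ℕ, 1 ≤ j →
      l j ∈ { s | s ∈ F ∧ l (j - 1) < s ∧ ∀ j' < j, 2 * ρ' ≤ ‖γ s - γ (l j')‖ } ∧
      l j = sInf { s | s ∈ F ∧ l (j - 1) < s ∧ ∀ j' < j, 2 * ρ' ≤ ‖γ s - γ (l j')‖ }) :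
    ∀ j : ℕ, L ≤ l j → l j ≤ A * j := by
  intro j hLj
  rcases j.eq_zero_or_pos with rfl | hj
  · simp [hl0]
  subst hr hF
  have hγ : LipschitzOnWith 1 γ (Ici 0) :=
    (convex_Ici 0).lipschitzOnWith_of_nnnorm_deriv_le
      (fun s _ => (hγC1.differentiable one_ne_zero).differentiableAt)
      (fun s hs => by rw [← NNReal.coe_le_coe, coe_nnnorm, hunit s hs, NNReal.coe_one])
  have hβ0 : 0 < β := by rw [hβ]; positivity
  have hδ0 : 0 < δ := by rw [hδ]; exact one_div_pos.2 (by linarith)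
  have hdens : δ * l j ≤ volume.real (Ioc 0 (l j) ∩ frontierTimes (fun t => ‖γ t‖) β) := by
    rw [hδ, hβ, one_div_mul_eq_div]
    exact div_le_volume_frontierTimes (by simp [hγ0]) hγ.norm (by linarith) (hL.trans hLj)
      (hcomp _ hLj).2
  have hcount := mul_volume_frontierTimes_inter_Ioc_le_of_greedy hγ0 hγ hβ0.le
    (mul_pos two_pos hρ') hl0 (fun j hj => (hlrec j hj).2) j
  have hj1 : (1 : ℝ) ≤ j := by exact_mod_cast hj
  rw [hA, div_mul_eq_mul_div, le_div_iff₀ (by positivity)]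
  nlinarith
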